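/- Let A be a congruence-distributive algebra which is local (i.e., A has exactly one maximal congruence) and such that ∇_A is a finitely generated congruence of A. Then A has the FCLP and the CBLP. -/

import Mathlib

/-! Universal-algebra framework: algebras over a signature, congruences,
factor congruences, lifting properties. -/

structure Signature where
  ops : Type
  arity : ops → ℕ

structure Alg (σ : Signature) where
  carrier : Type
  interp : ∀ f : σ.ops, (Fin (σ.arity f) → carrier) → carrier

namespace Alg

variable {σ : Signature}

/-- A congruence: an equivalence relation compatible with all operations. -/
def IsCon (A : Alg σ) (r : A.carrier → A.carrier → Prop) : Prop :=
  Equivalence r ∧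
    ∀ (f : σ.ops) (x y : Fin (σ.arity f) → A.carrier),
      (∀ i, r (x i) (y i)) → r (A.interp f x) (A.interp f y)

/-- The least congruence `Δ_A`. -/
def delta (A : Alg σ) : A.carrier → A.carrier → Prop := fun a b => a = b

/-- The greatest congruence `∇_A = A²`. -/
def nabla (A : Alg σ) : A.carrier → A.carrier → Prop := fun _ _ => True

/-- Meet (intersection) of congruences. -/
def conMeet (A : Alg σ) (r s : A.carrier → A.carrier → Prop) :
    A.carrier → A.carrier → Prop := fun a b => r a b ∧ s a b

/-- Join of congruences: the least congruence containing both. -/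
def conJoin (A : Alg σ) (r s : A.carrier → A.carrier → Prop) :
    A.carrier → A.carrier → Prop := fun a b =>
  ∀ t, A.IsCon t → (∀ x y, r x y → t x y) → (∀ x y, s x y → t x y) → t a b

/-- The congruence generated by a set of pairs. -/
def conGen (A : Alg σ) (X : Set (A.carrier × A.carrier)) :
    A.carrier → A.carrier → Prop := fun a b =>
  ∀ t, A.IsCon t → (∀ p ∈ X, t p.1 p.2) → t a b

/-- Composition of relations: `(a,b) ∈ comp r s` iff `(a,x) ∈ s` and `(x,b) ∈ r`
for some `x`. -/
def comp (A : Alg σ) (r s : A.carrier → A.carrier → Prop) :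
    A.carrier → A.carrier → Prop := fun a b => ∃ x, s a x ∧ r x b

/-- Factor congruences: congruences `φ` having a congruence `φ*` with
`φ ∨ φ* = ∇`, `φ ∩ φ* = Δ` and `φ ∘ φ* = φ* ∘ φ`. -/
def IsFC (A : Alg σ) (φ : A.carrier → A.carrier → Prop) : Prop :=
  A.IsCon φ ∧ ∃ ψ, A.IsCon ψ ∧ A.conJoin φ ψ = A.nabla ∧
    A.conMeet φ ψ = A.delta ∧ A.comp φ ψ = A.comp ψ φ

/-- Boolean congruences: complemented elements of the lattice `Con(A)`. -/
def IsBooleanCon (A : Alg σ) (φ : A.carrier → A.carrier → Prop) : Prop :=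
  A.IsCon φ ∧ ∃ ψ, A.IsCon ψ ∧ A.conJoin φ ψ = A.nabla ∧ A.conMeet φ ψ = A.delta

/-- `A` is congruence-distributive iff the lattice `Con(A)` is distributive. -/
def CongDistrib (A : Alg σ) : Prop :=
  ∀ r s t, A.IsCon r → A.IsCon s → A.IsCon t →
    A.conMeet r (A.conJoin s t) = A.conJoin (A.conMeet r s) (A.conMeet r t)

/-- `A` is congruence-permutable iff all congruences permute under composition. -/
def CongPermutable (A : Alg σ) : Prop :=
  ∀ r s, A.IsCon r → A.IsCon s → A.comp r s = A.comp s r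

/-- Arithmetical = congruence-distributive + congruence-permutable. -/
def Arithmetical (A : Alg σ) : Prop := A.CongDistrib ∧ A.CongPermutable

/-- The quotient algebra `A/θ`. -/
noncomputable def quotAlg (A : Alg σ) (θ : A.carrier → A.carrier → Prop) :
    Alg σ where
  carrier := Quot θ
  interp f x := Quot.mk θ (A.interp f fun i => (x i).out)

/-- The image `α/θ = {(a/θ, b/θ) : (a,b) ∈ α}` of a relation in the quotient. -/
def quotRel (A : Alg σ) (θ α : A.carrier → A.carrier → Prop) :
    Quot θ → Quot θ → Prop := fun x y =>
  ∃ a b, x = Quot.mk θ a ∧ y = Quot.mk θ b ∧ α a b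

/-- `θ` has the Factor Congruence Lifting Property: the Boolean morphism
`FC(θ) : FC(A) → FC(A/θ)`, `ψ ↦ (ψ ∨ θ)/θ`, is surjective. -/
def HasFCLP (A : Alg σ) (θ : A.carrier → A.carrier → Prop) : Prop :=
  ∀ γ, (A.quotAlg θ).IsFC γ →
    ∃ ψ, A.IsFC ψ ∧ A.quotRel θ (A.conJoin ψ θ) = γ

/-- `θ` has the Congruence Boolean Lifting Property: the Boolean morphism
`B(Con(A)) → B(Con(A/θ))`, `ψ ↦ (ψ ∨ θ)/θ`, is surjective. -/
def HasCBLP (A : Alg σ) (θ : A.carrier → A.carrier → Prop) : Prop :=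
  ∀ γ, (A.quotAlg θ).IsBooleanCon γ →
    ∃ ψ, A.IsBooleanCon ψ ∧ A.quotRel θ (A.conJoin ψ θ) = γ

/-- `A` has FCLP iff every congruence of `A` has FCLP. -/
def AlgFCLP (A : Alg σ) : Prop := ∀ θ, A.IsCon θ → A.HasFCLP θ

/-- `A` has CBLP iff every congruence of `A` has CBLP. -/
def AlgCBLP (A : Alg σ) : Prop := ∀ θ, A.IsCon θ → A.HasCBLP θ

/-- FC-normality. -/
def FCNormal (A : Alg σ) : Prop :=
  ∀ φ ψ, A.IsCon φ → A.IsCon ψ → A.comp φ ψ = A.nabla →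
    ∃ α β, A.IsFC α ∧ A.IsFC β ∧ A.conMeet α β = A.delta ∧
      A.comp φ α = A.nabla ∧ A.comp ψ β = A.nabla

/-- B-normality. -/
def BNormal (A : Alg σ) : Prop :=
  ∀ φ ψ, A.IsCon φ → A.IsCon ψ → A.conJoin φ ψ = A.nabla →
    ∃ α β, A.IsBooleanCon α ∧ A.IsBooleanCon β ∧ A.conMeet α β = A.delta ∧
      A.conJoin φ α = A.nabla ∧ A.conJoin ψ β = A.nabla

/-- Isomorphism of algebras. -/
def Iso (A B : Alg σ) : Prop :=
  ∃ e : A.carrier ≃ B.carrier,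
    ∀ (f : σ.ops) (x : Fin (σ.arity f) → A.carrier),
      e (A.interp f x) = B.interp f fun i => e (x i)

/-- Direct product of a finite family of algebras. -/
def prodAlg {n : ℕ} (B : Fin n → Alg σ) : Alg σ where
  carrier := ∀ i, (B i).carrier
  interp f x := fun i => (B i).interp f fun j => x j i

/-- The product congruence `θ₁ × … × θₙ`. -/
def prodRel {n : ℕ} (B : Fin n → Alg σ)
    (θ : ∀ i, (B i).carrier → (B i).carrier → Prop) :
    (prodAlg B).carrier → (prodAlg B).carrier → Prop :=
  fun x y => ∀ i, θ i (x i) (y i)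

/-- Maximal congruences: maximal elements of `(Con(A) \ {∇}, ⊆)`. -/
def IsMaxCon (A : Alg σ) (θ : A.carrier → A.carrier → Prop) : Prop :=
  A.IsCon θ ∧ θ ≠ A.nabla ∧
    ∀ ψ, A.IsCon ψ → ψ ≠ A.nabla → (∀ a b, θ a b → ψ a b) → ψ = θ

/-- Prime congruences. -/
def IsPrimeCon (A : Alg σ) (θ : A.carrier → A.carrier → Prop) : Prop :=
  A.IsCon θ ∧ ∀ α β, A.IsCon α → A.IsCon β →
    (∀ a b, α a b → β a b → θ a b) →
    (∀ a b, α a b → θ a b) ∨ ∀ a b, β a b → θ a b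

end Alg

/-! Since `∇` is finitely generated, Zorn's lemma puts every proper congruence below a maximal
one; in a local algebra two proper congruences therefore lie below the unique maximal
congruence, so their join is proper. This property passes to every quotient `A/θ`, where it
forces each complemented congruence to be `Δ` or `∇`, the images of the factor congruences
`Δ_A` and `∇_A`. -/

namespace Alg

variable {σ : Signature} {A : Alg σ}

theorem mk_eq_mk_iff {θ : A.carrier → A.carrier → Prop} (hθ : A.IsCon θ) {a b : A.carrier} :
    Quot.mk θ a = Quot.mk θ b ↔ θ a b :=
  ⟨fun h => hθ.1.eqvGen_iff.mp (Quot.eqvGen_exact h), Quot.sound⟩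

theorem isCon_delta (A : Alg σ) : A.IsCon A.delta :=
  ⟨⟨fun _ => rfl, Eq.symm, Eq.trans⟩, fun f _ _ h => congrArg (A.interp f) (funext h)⟩

theorem isCon_nabla (A : Alg σ) : A.IsCon A.nabla :=
  ⟨⟨fun _ => trivial, fun _ => trivial, fun _ _ => trivial⟩, fun _ _ _ _ => trivial⟩

theorem eq_nabla_iff {r : A.carrier → A.carrier → Prop} : r = A.nabla ↔ ∀ a b, r a b :=
  ⟨fun h _ _ => h ▸ trivial,
    fun h => funext₂ fun a b => propext ⟨fun _ => trivial, fun _ => h a b⟩⟩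

theorem ne_nabla_iff_exists_not {X : Set (A.carrier × A.carrier)} (hX : A.conGen X = A.nabla)
    {t : A.carrier → A.carrier → Prop} (ht : A.IsCon t) :
    t ≠ A.nabla ↔ ∃ p ∈ X, ¬ t p.1 p.2 := by
  refine ⟨fun htn => ?_, fun ⟨p, _, hp⟩ htn => hp (eq_nabla_iff.mp htn p.1 p.2)⟩
  by_contra! hXt
  exact htn (eq_nabla_iff.mpr fun a b => (hX ▸ trivial : A.conGen X a b) t ht hXt)

theorem isCon_sUnion {c : Set (Set (A.carrier × A.carrier))} (hc : IsChain (· ⊆ ·) c)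
    (hne : c.Nonempty) (hcon : ∀ s ∈ c, A.IsCon fun a b => (a, b) ∈ s) :
    A.IsCon fun a b => (a, b) ∈ ⋃₀ c := by
  have bound {p : Set (A.carrier × A.carrier)} (hp : p.Finite) (hpc : p ⊆ ⋃₀ c) :
      ∃ s ∈ c, p ⊆ s :=
    hc.directedOn.exists_mem_subset_of_finite_of_subset_sUnion hne hp hpc
  obtain ⟨s₀, hs₀⟩ := hne
  refine ⟨⟨fun a => ⟨s₀, hs₀, (hcon s₀ hs₀).1.refl a⟩, ?_, ?_⟩, ?_⟩
  · rintro a b ⟨s, hs, hab⟩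
    exact ⟨s, hs, (hcon s hs).1.symm hab⟩
  · intro a b d hab hbd
    obtain ⟨s, hs, hsub⟩ := bound (Set.toFinite {(a, b), (b, d)}) (Set.pair_subset hab hbd)
    exact ⟨s, hs, (hcon s hs).1.trans (hsub (Or.inl rfl)) (hsub (Or.inr rfl))⟩
  · intro f x y hxy
    obtain ⟨s, hs, hsub⟩ :=
      bound (Set.finite_range fun i => (x i, y i)) (Set.range_subset_iff.2 hxy)
    exact ⟨s, hs, (hcon s hs).2 f x y fun i => hsub ⟨i, rfl⟩⟩

theorem exists_isMaxCon_ge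
    (hfg : ∃ X : Set (A.carrier × A.carrier), X.Finite ∧ A.conGen X = A.nabla)
    {r : A.carrier → A.carrier → Prop} (hr : A.IsCon r) (hrn : r ≠ A.nabla) :
    ∃ m, A.IsMaxCon m ∧ ∀ a b, r a b → m a b := by
  obtain ⟨X, hXfin, hX⟩ := hfg
  -- Properness is witnessed inside the finite set `X`, which makes it survive unions of chains.
  set S : Set (Set (A.carrier × A.carrier)) :=
    {s | A.IsCon (fun a b => (a, b) ∈ s) ∧ (∃ p ∈ X, p ∉ s) ∧ ∀ a b, r a b → (a, b) ∈ s}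
  have hchain : ∀ c ⊆ S, IsChain (· ⊆ ·) c → c.Nonempty → ∃ ub ∈ S, ∀ s ∈ c, s ⊆ ub := by
    intro c hcS hc hne
    obtain ⟨s₀, hs₀⟩ := hne
    refine ⟨⋃₀ c, ⟨isCon_sUnion hc ⟨s₀, hs₀⟩ fun s hs => (hcS hs).1, ?_,
      fun a b hab => ⟨s₀, hs₀, (hcS hs₀).2.2 a b hab⟩⟩,
      fun s hs => Set.subset_sUnion_of_mem hs⟩
    by_contra! hXc
    obtain ⟨s, hs, hXs⟩ :=
      hc.directedOn.exists_mem_subset_of_finite_of_subset_sUnion ⟨s₀, hs₀⟩ hXfin hXc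
    obtain ⟨p, hpX, hps⟩ := (hcS hs).2.1
    exact hps (hXs hpX)
  have mem_S {t : A.carrier → A.carrier → Prop} (ht : A.IsCon t) (htn : t ≠ A.nabla)
      (hrt : ∀ a b, r a b → t a b) : {p | t p.1 p.2} ∈ S :=
    ⟨ht, (ne_nabla_iff_exists_not hX ht).mp htn, hrt⟩
  obtain ⟨m, hrm, hm⟩ := zorn_subset_nonempty S hchain _ (mem_S hr hrn fun _ _ h => h)
  refine ⟨fun a b => (a, b) ∈ m, ⟨hm.1.1, ?_, ?_⟩, fun a b h => hrm h⟩
  · exact (ne_nabla_iff_exists_not hX hm.1.1).mpr hm.1.2.1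
  · intro ψ hψ hψn hmψ
    have hψm :=
      hm.2 (mem_S hψ hψn fun a b h => hmψ a b (hrm h)) fun p hp => hmψ p.1 p.2 hp
    exact funext₂ fun a b => propext ⟨fun h => hψm h, hmψ a b⟩

def TopJoinIrreducible (A : Alg σ) : Prop :=
  ∀ φ ψ, A.IsCon φ → A.IsCon ψ → A.conJoin φ ψ = A.nabla → φ = A.nabla ∨ ψ = A.nabla

theorem topJoinIrreducible_of_existsUnique_isMaxCon (hloc : ∃! μ, A.IsMaxCon μ)
    (hfg : ∃ X : Set (A.carrier × A.carrier), X.Finite ∧ A.conGen X = A.nabla) :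
    A.TopJoinIrreducible := by
  intro φ ψ hφ hψ hjoin
  by_contra! hne
  obtain ⟨μ, hμ, huniq⟩ := hloc
  obtain ⟨m₁, hm₁, hφm₁⟩ := exists_isMaxCon_ge hfg hφ hne.1
  obtain ⟨m₂, hm₂, hψm₂⟩ := exists_isMaxCon_ge hfg hψ hne.2
  rw [huniq m₁ hm₁] at hφm₁
  rw [huniq m₂ hm₂] at hψm₂
  exact hμ.2.1 (eq_nabla_iff.mpr fun a b =>
    (hjoin ▸ trivial : A.conJoin φ ψ a b) μ hμ.1 hφm₁ hψm₂)

section Quotient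

variable {θ : A.carrier → A.carrier → Prop}

def comapQuot (θ : A.carrier → A.carrier → Prop) (γ : Quot θ → Quot θ → Prop) :
    A.carrier → A.carrier → Prop :=
  fun a b => γ (Quot.mk θ a) (Quot.mk θ b)

theorem interp_mk (hθ : A.IsCon θ) (f : σ.ops) (x : Fin (σ.arity f) → A.carrier) :
    (A.quotAlg θ).interp f (fun i => Quot.mk θ (x i)) = Quot.mk θ (A.interp f x) :=
  Quot.sound (hθ.2 f _ _ fun i => (mk_eq_mk_iff hθ).mp (Quot.mk θ (x i)).out_eq)

theorem isCon_comapQuot (hθ : A.IsCon θ) {γ : Quot θ → Quot θ → Prop}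
    (hγ : (A.quotAlg θ).IsCon γ) : A.IsCon (comapQuot θ γ) := by
  refine ⟨⟨fun a => hγ.1.refl _, hγ.1.symm, hγ.1.trans⟩, fun f x y h => ?_⟩
  have := hγ.2 f (fun i => Quot.mk θ (x i)) (fun i => Quot.mk θ (y i)) h
  rwa [interp_mk hθ f x, interp_mk hθ f y] at this

theorem comapQuot_eq_nabla_iff {γ : Quot θ → Quot θ → Prop} :
    comapQuot θ γ = A.nabla ↔ γ = (A.quotAlg θ).nabla := by
  refine ⟨fun h => (eq_nabla_iff (A := A.quotAlg θ)).mpr ?_,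
    fun h => eq_nabla_iff.mpr fun _ _ => (eq_nabla_iff (A := A.quotAlg θ)).mp h _ _⟩
  rintro ⟨a⟩ ⟨b⟩
  exact eq_nabla_iff.mp h a b

theorem quotRel_mk_mk_iff {t : A.carrier → A.carrier → Prop} (hθ : A.IsCon θ) (ht : A.IsCon t)
    (hθt : ∀ a b, θ a b → t a b) {a b : A.carrier} :
    A.quotRel θ t (Quot.mk θ a) (Quot.mk θ b) ↔ t a b := by
  constructor
  · rintro ⟨a', b', ha, hb, hab⟩
    exact ht.1.trans (hθt _ _ ((mk_eq_mk_iff hθ).mp ha))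
      (ht.1.trans hab (hθt _ _ ((mk_eq_mk_iff hθ).mp hb.symm)))
  · exact fun h => ⟨a, b, rfl, rfl, h⟩

theorem isCon_quotRel {t : A.carrier → A.carrier → Prop} (hθ : A.IsCon θ) (ht : A.IsCon t)
    (hθt : ∀ a b, θ a b → t a b) : (A.quotAlg θ).IsCon (A.quotRel θ t) := by
  have key := @quotRel_mk_mk_iff _ _ _ _ hθ ht hθt
  refine ⟨⟨?_, ?_, ?_⟩, ?_⟩
  · rintro ⟨a⟩
    exact key.2 (ht.1.refl a)
  · rintro ⟨a⟩ ⟨b⟩ h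
    exact key.2 (ht.1.symm (key.1 h))
  · rintro ⟨a⟩ ⟨b⟩ ⟨d⟩ h₁ h₂
    exact key.2 (ht.1.trans (key.1 h₁) (key.1 h₂))
  · intro f x y h
    refine ⟨A.interp f fun i => (x i).out, A.interp f fun i => (y i).out, rfl, rfl,
      ht.2 f _ _ fun i => key.1 ?_⟩
    rw [(x i).out_eq, (y i).out_eq]
    exact h i

theorem conJoin_comapQuot_eq_nabla (hθ : A.IsCon θ) {γ ψ : Quot θ → Quot θ → Prop}
    (hγ : (A.quotAlg θ).IsCon γ) (hjoin : (A.quotAlg θ).conJoin γ ψ = (A.quotAlg θ).nabla) :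
    A.conJoin (comapQuot θ γ) (comapQuot θ ψ) = A.nabla := by
  refine eq_nabla_iff.mpr fun a b t ht hγt hψt => ?_
  have hθt : ∀ a b, θ a b → t a b := by
    intro a b h
    apply hγt
    simp only [comapQuot, Quot.sound h]
    exact hγ.1.refl _
  have key := @quotRel_mk_mk_iff _ _ _ _ hθ ht hθt
  refine key.1 ((hjoin ▸ trivial : (A.quotAlg θ).conJoin γ ψ _ _) _ (isCon_quotRel hθ ht hθt)
    ?_ ?_)
  · exact Quot.ind fun a => Quot.ind fun b h => key.2 (hγt a b h)
  · exact Quot.ind fun a => Quot.ind fun b h => key.2 (hψt a b h)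

theorem TopJoinIrreducible.quotAlg (hA : A.TopJoinIrreducible) (hθ : A.IsCon θ) :
    (A.quotAlg θ).TopJoinIrreducible := by
  intro γ ψ hγ hψ hjoin
  exact (hA _ _ (isCon_comapQuot hθ hγ) (isCon_comapQuot hθ hψ)
    (conJoin_comapQuot_eq_nabla hθ hγ hjoin)).imp comapQuot_eq_nabla_iff.mp
      comapQuot_eq_nabla_iff.mp

theorem nabla_conJoin (θ : A.carrier → A.carrier → Prop) : A.conJoin A.nabla θ = A.nabla :=
  eq_nabla_iff.mpr fun a b _ _ h _ => h a b trivial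

theorem delta_conJoin (hθ : A.IsCon θ) : A.conJoin A.delta θ = θ :=
  funext₂ fun a b => propext
    ⟨fun h => h θ hθ (fun x _ hxy => hxy ▸ hθ.1.refl x) fun _ _ => id,
     fun h _ _ _ ht => ht a b h⟩

theorem quotRel_nabla (θ : A.carrier → A.carrier → Prop) :
    A.quotRel θ A.nabla = (A.quotAlg θ).nabla :=
  (eq_nabla_iff (A := A.quotAlg θ)).mpr <| by
    rintro ⟨a⟩ ⟨b⟩
    exact ⟨a, b, rfl, rfl, trivial⟩

theorem quotRel_self (hθ : A.IsCon θ) : A.quotRel θ θ = (A.quotAlg θ).delta := by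
  funext x y
  refine propext ⟨fun ⟨_, _, hx, hy, hab⟩ => hx ▸ hy ▸ Quot.sound hab, ?_⟩
  rintro rfl
  obtain ⟨a, rfl⟩ := Quot.exists_rep x
  exact ⟨a, a, rfl, rfl, hθ.1.refl a⟩

end Quotient

theorem TopJoinIrreducible.eq_nabla_or_eq_delta (hA : A.TopJoinIrreducible)
    {γ : A.carrier → A.carrier → Prop} (hγ : A.IsBooleanCon γ) :
    γ = A.nabla ∨ γ = A.delta := by
  obtain ⟨hγc, ψ, hψ, hjoin, hmeet⟩ := hγ
  refine (hA γ ψ hγc hψ hjoin).imp_right fun hψn => ?_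
  rw [← hmeet, hψn]
  exact funext₂ fun a b => propext ⟨fun h => ⟨h, trivial⟩, And.left⟩

theorem isFC_nabla (A : Alg σ) : A.IsFC A.nabla := by
  refine ⟨A.isCon_nabla, A.delta, A.isCon_delta, nabla_conJoin _, ?_, ?_⟩
  · exact funext₂ fun a b => propext ⟨And.right, fun h => ⟨trivial, h⟩⟩
  · exact funext₂ fun a b =>
      propext ⟨fun _ => ⟨b, trivial, rfl⟩, fun _ => ⟨a, rfl, trivial⟩⟩

theorem isFC_delta (A : Alg σ) : A.IsFC A.delta := by
  refine ⟨A.isCon_delta, A.nabla, A.isCon_nabla, ?_, ?_, ?_⟩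
  · exact eq_nabla_iff.mpr fun a b _ _ _ h => h a b trivial
  · exact funext₂ fun a b => propext ⟨And.left, fun h => ⟨h, trivial⟩⟩
  · exact funext₂ fun a b =>
      propext ⟨fun _ => ⟨a, rfl, trivial⟩, fun _ => ⟨b, trivial, rfl⟩⟩

theorem IsFC.isBooleanCon {φ : A.carrier → A.carrier → Prop} (h : A.IsFC φ) :
    A.IsBooleanCon φ :=
  let ⟨hφ, ψ, hψ, hjoin, hmeet, _⟩ := h
  ⟨hφ, ψ, hψ, hjoin, hmeet⟩

theorem TopJoinIrreducible.exists_isFC_lift (hA : A.TopJoinIrreducible)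
    {θ : A.carrier → A.carrier → Prop} (hθ : A.IsCon θ) {γ : Quot θ → Quot θ → Prop}
    (hγ : (A.quotAlg θ).IsBooleanCon γ) :
    ∃ ψ, A.IsFC ψ ∧ A.quotRel θ (A.conJoin ψ θ) = γ := by
  rcases (hA.quotAlg hθ).eq_nabla_or_eq_delta hγ with rfl | rfl
  · exact ⟨A.nabla, A.isFC_nabla, by rw [nabla_conJoin, quotRel_nabla]⟩
  · exact ⟨A.delta, A.isFC_delta, by rw [delta_conJoin hθ, quotRel_self hθ]⟩

end Alg

theorem stmt_17_general {σ : Signature} (A : Alg σ)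
    (hloc : ∃! μ, A.IsMaxCon μ)
    (hfg : ∃ X : Set (A.carrier × A.carrier), X.Finite ∧ A.conGen X = A.nabla) :
    A.AlgFCLP ∧ A.AlgCBLP := by
  have hA := Alg.topJoinIrreducible_of_existsUnique_isMaxCon hloc hfg
  refine ⟨fun θ hθ γ hγ => hA.exists_isFC_lift hθ hγ.isBooleanCon, fun θ hθ γ hγ => ?_⟩
  obtain ⟨ψ, hψ, hlift⟩ := hA.exists_isFC_lift hθ hγ
  exact ⟨ψ, hψ.isBooleanCon, hlift⟩

/-- A local congruence-distributive algebra in which `∇` is a finitely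
generated congruence has the FCLP and the CBLP. -/
theorem stmt_17 {σ : Signature} (A : Alg σ) (hne : Nonempty A.carrier)
    (hcd : A.CongDistrib) (hloc : ∃! μ, A.IsMaxCon μ)
    (hfg : ∃ X : Set (A.carrier × A.carrier), X.Finite ∧ A.conGen X = A.nabla) :
    A.AlgFCLP ∧ A.AlgCBLP :=
  stmt_17_general A hloc hfg
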